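/- arXiv:2004.14063 — 3 statements merged into one kernel-verified Lean document; each statement's English description precedes it below -/
import Mathlib

section
/- Let δ be an expansion function on L and φ : L → L a function with φ(a) ≤ a for all a ∈ L. A proper element q ∈ L is φ-δ-primary if and only if for every a ∈ L with a ≰ q, either (q : a) ≤ δ(q) or (q : a) = (φ(q) : a). -/
open CompleteLattice

variable {L : Type*} [CompleteLattice L] [CommMonoid L]

/-- `L` is a compactly generated multiplicative lattice: multiplication distributes over
arbitrary joins, the top element is the multiplicative identity, `1` is a compact element,
every element is a join of compact elements, and products of compact elements are compact. -/
def IsCGMultLattice (L : Type*) [CompleteLattice L] [CommMonoid L] : Prop :=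
  (∀ (a : L) (S : Set L), a * sSup S = ⨆ b ∈ S, a * b) ∧
  ((1 : L) = ⊤) ∧
  IsCompactElement (1 : L) ∧
  (∀ a : L, a = sSup {x : L | IsCompactElement x ∧ x ≤ a}) ∧
  (∀ x y : L, IsCompactElement x → IsCompactElement y →
    IsCompactElement (x * y))

/-- An expansion function on `L`: `a ≤ δ a` and `δ` is monotone. -/
def IsExpansion (δ : L → L) : Prop :=
  (∀ a : L, a ≤ δ a) ∧ ∀ a b : L, a ≤ b → δ a ≤ δ b

/-- A proper element `p` is `φ`-`δ`-primary if `a*b ≤ p` and `a*b ≰ φ p` imply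
`a ≤ p` or `b ≤ δ p`. -/
def IsPhiDeltaPrimary (φ δ : L → L) (p : L) : Prop :=
  p < 1 ∧ ∀ a b : L, a * b ≤ p → ¬ a * b ≤ φ p → a ≤ p ∨ b ≤ δ p

/-- A proper element `p` is `δ`-primary if `a*b ≤ p` implies `a ≤ p` or `b ≤ δ p`. -/
def IsDeltaPrimary (δ : L → L) (p : L) : Prop :=
  p < 1 ∧ ∀ a b : L, a * b ≤ p → a ≤ p ∨ b ≤ δ p

/-- A proper element `p` is `φ`-prime if `a*b ≤ p` and `a*b ≰ φ p` imply
`a ≤ p` or `b ≤ p`. -/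
def IsPhiPrime (φ : L → L) (p : L) : Prop :=
  p < 1 ∧ ∀ a b : L, a * b ≤ p → ¬ a * b ≤ φ p → a ≤ p ∨ b ≤ p

/-- The residual `(a : b)`, the join of all `x` with `x * b ≤ a`. -/
def lres (a b : L) : L := sSup {x : L | x * b ≤ a}

/-- The radical `√a`, the join of all compact `x` with `x ^ n ≤ a` for some `n ≥ 1`. -/
def lradical (a : L) : L :=
  sSup {x : L | IsCompactElement x ∧ ∃ n : ℕ, 0 < n ∧ x ^ n ≤ a}

/-- A principal element of a multiplicative lattice. -/
def IsPrincipalElem (e : L) : Prop :=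
  ∀ a b : L, a ⊓ b * e = (lres a e ⊓ b) * e ∧ lres (a * e ⊔ b) e = lres b e ⊔ a

/-- A Noether lattice: modular, principally generated, satisfying the ascending
chain condition. -/
def IsNoetherLattice (L : Type*) [CompleteLattice L] [CommMonoid L] : Prop :=
  IsModularLattice L ∧ (∀ a : L, a = sSup {e : L | IsPrincipalElem e ∧ e ≤ a}) ∧
  WellFoundedGT L

/-- A maximal element: proper, and `m < x ≤ 1` implies `x = 1`. -/
def IsMaximalElem (m : L) : Prop :=
  m < 1 ∧ ∀ x : L, m < x → x ≤ 1 → x = 1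

lemma mul_sup_of_mul_sSup (hmul : ∀ (a : L) (S : Set L), a * sSup S = ⨆ b ∈ S, a * b)
    (a x y : L) : a * (x ⊔ y) = a * x ⊔ a * y := by
  rw [← sSup_pair, hmul, iSup_pair]

lemma mul_le_mul_right_of_mul_sSup
    (hmul : ∀ (a : L) (S : Set L), a * sSup S = ⨆ b ∈ S, a * b) {b c : L} (h : b ≤ c) (a : L) :
    b * a ≤ c * a := by
  rw [mul_comm b, mul_comm c, ← sup_eq_right.mpr h, mul_sup_of_mul_sSup hmul]
  exact le_sup_left

lemma lres_mul_le (hmul : ∀ (a : L) (S : Set L), a * sSup S = ⨆ b ∈ S, a * b) (c a : L) :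
    lres c a * a ≤ c := by
  rw [mul_comm, lres, hmul]
  exact iSup₂_le fun x hx => mul_comm a x ▸ hx

lemma le_lres_iff (hmul : ∀ (a : L) (S : Set L), a * sSup S = ⨆ b ∈ S, a * b) {x c a : L} :
    x ≤ lres c a ↔ x * a ≤ c :=
  ⟨fun h => (mul_le_mul_right_of_mul_sSup hmul h a).trans (lres_mul_le hmul c a),
    fun h => le_sSup h⟩

lemma lres_mono_left {c d : L} (h : c ≤ d) (a : L) : lres c a ≤ lres d a :=
  sSup_le_sSup fun _ hx => le_trans hx h

lemma IsPhiDeltaPrimary.lres_le_or_eq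
    (hmul : ∀ (a : L) (S : Set L), a * sSup S = ⨆ b ∈ S, a * b) {φ δ : L → L} {q : L}
    (hφ : φ q ≤ q) (hq : IsPhiDeltaPrimary φ δ q) {a : L} (ha : ¬ a ≤ q) :
    lres q a ≤ δ q ∨ lres q a = lres (φ q) a := by
  refine or_iff_not_imp_left.mpr fun hr => le_antisymm ?_ (lres_mono_left hφ a)
  -- `(q : a)` is the largest `x` with `x * a ≤ q`, so testing primality on `a * (q : a)` suffices.
  have hmem : a * lres q a ≤ q := mul_comm a (lres q a) ▸ lres_mul_le hmul q a
  have hφmem : a * lres q a ≤ φ q := by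
    by_contra hnot
    exact (hq.2 a _ hmem hnot).elim ha hr
  exact le_lres_iff hmul |>.mpr (mul_comm a (lres q a) ▸ hφmem)

lemma isPhiDeltaPrimary_of_lres_le_or_eq
    (hmul : ∀ (a : L) (S : Set L), a * sSup S = ⨆ b ∈ S, a * b) {φ δ : L → L} {q : L}
    (hq : q < 1) (h : ∀ a : L, ¬ a ≤ q → lres q a ≤ δ q ∨ lres q a = lres (φ q) a) :
    IsPhiDeltaPrimary φ δ q := by
  refine ⟨hq, fun a b hab hnab => or_iff_not_imp_left.mpr fun ha => ?_⟩
  have hb : b ≤ lres q a := le_lres_iff hmul |>.mpr (mul_comm a b ▸ hab)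
  rcases h a ha with hδ | heq
  · exact hb.trans hδ
  · exact absurd (mul_comm b a ▸ (le_lres_iff hmul).mp (heq ▸ hb)) hnab

theorem phiDeltaPrimary_iff_residual_general (hL : IsCGMultLattice L)
    (δ φ : L → L) (hφ : ∀ a : L, φ a ≤ a)
    (q : L) (hq : q < 1) :
    IsPhiDeltaPrimary φ δ q ↔
      ∀ a : L, ¬ a ≤ q → lres q a ≤ δ q ∨ lres q a = lres (φ q) a :=
  ⟨fun h _ ha => h.lres_le_or_eq hL.1 (hφ q) ha, isPhiDeltaPrimary_of_lres_le_or_eq hL.1 hq⟩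

theorem phiDeltaPrimary_iff_residual (hL : IsCGMultLattice L)
    (δ φ : L → L) (hδ : IsExpansion δ) (hφ : ∀ a : L, φ a ≤ a)
    (q : L) (hq : q < 1) :
    IsPhiDeltaPrimary φ δ q ↔
      ∀ a : L, ¬ a ≤ q → lres q a ≤ δ q ∨ lres q a = lres (φ q) a :=
  phiDeltaPrimary_iff_residual_general hL δ φ hφ q hq
end

section
/- Let δ be an expansion function on L, let n ≥ 2 and 2 ≤ k ≤ n be integers, and let q ∈ L be a proper element which is k-potent δ-primary, i.e. for all a, b ∈ L, a·b ≤ q^k implies a ≤ q or b ≤ δ(q). Let φ : L → L be a function with φ(a) ≤ a and φ(a) ≤ aⁿ for all a ∈ L. Then q is φ-δ-primary if and only if q is δ-primary. -/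
open CompleteLattice

variable {L : Type*} [CompleteLattice L] [CommMonoid L]

namespace IsCGMultLattice

theorem mul_le_mul_left (hL : IsCGMultLattice L) (a : L) {b c : L} (hbc : b ≤ c) :
    a * b ≤ a * c := by
  have hdist : a * c = a * b ⊔ a * c := by
    simpa only [sSup_pair, sup_eq_right.mpr hbc, iSup_pair] using hL.1 a {b, c}
  rw [hdist]
  exact le_sup_left

theorem pow_antitone (hL : IsCGMultLattice L) (a : L) : Antitone (a ^ ·) := by
  intro k n hkn
  calc a ^ n = a ^ k * a ^ (n - k) := by rw [← pow_add, Nat.add_sub_cancel' hkn]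
    _ ≤ a ^ k * 1 := hL.mul_le_mul_left _ (hL.2.1 ▸ le_top)
    _ = a ^ k := mul_one _

end IsCGMultLattice

theorem IsDeltaPrimary.isPhiDeltaPrimary {δ : L → L} {q : L} (h : IsDeltaPrimary δ q)
    (φ : L → L) : IsPhiDeltaPrimary φ δ q :=
  ⟨h.1, fun a b hab _ => h.2 a b hab⟩

theorem IsPhiDeltaPrimary.isDeltaPrimary {φ δ : L → L} {q : L} (h : IsPhiDeltaPrimary φ δ q)
    (hφ : ∀ a b : L, a * b ≤ φ q → a ≤ q ∨ b ≤ δ q) : IsDeltaPrimary δ q := by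
  refine ⟨h.1, fun a b hab => ?_⟩
  by_cases hab' : a * b ≤ φ q
  · exact hφ a b hab'
  · exact h.2 a b hab hab'

theorem kPotent_phi_iff_delta_general (hL : IsCGMultLattice L)
    (δ : L → L) (n k : ℕ)
    (hkn : k ≤ n) (q : L)
    (hkpot : ∀ a b : L, a * b ≤ q ^ k → a ≤ q ∨ b ≤ δ q)
    (φ : L → L) (hφn : ∀ a : L, φ a ≤ a ^ n) :
    IsPhiDeltaPrimary φ δ q ↔ IsDeltaPrimary δ q :=
  ⟨fun h => h.isDeltaPrimary fun a b hab =>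
      hkpot a b (hab.trans ((hφn q).trans (hL.pow_antitone q hkn))),
    fun h => h.isPhiDeltaPrimary φ⟩

theorem kPotent_phi_iff_delta (hL : IsCGMultLattice L)
    (δ : L → L) (hδ : IsExpansion δ) (n k : ℕ) (hn : 2 ≤ n) (hk : 2 ≤ k)
    (hkn : k ≤ n) (q : L) (hq : q < 1)
    (hkpot : ∀ a b : L, a * b ≤ q ^ k → a ≤ q ∨ b ≤ δ q)
    (φ : L → L) (hφ : ∀ a : L, φ a ≤ a) (hφn : ∀ a : L, φ a ≤ a ^ n) :
    IsPhiDeltaPrimary φ δ q ↔ IsDeltaPrimary δ q :=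
  kPotent_phi_iff_delta_general hL δ n k hkn q hkpot φ hφn
end

section
/- Let δ be an expansion function on L and φ : L → L a function with φ(a) ≤ a for all a ∈ L. If a proper element q ∈ L is φ-δ-primary but not δ-primary, then √q = √(φ(q)). -/
open CompleteLattice

variable {L : Type*} [CompleteLattice L] [CommMonoid L]

/-! If `a * b ≤ q` witnesses that `q` is not `δ`-primary, then so does `(a ⊔ q) * (b ⊔ q) ≤ q`;
`φ`-`δ`-primariness then forces `(a ⊔ q) * (b ⊔ q) ≤ φ q`, hence `q * q ≤ φ q ≤ q`, so `q` and `φ q`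
have the same radical. -/

namespace IsCGMultLattice

theorem mul_sup (hL : IsCGMultLattice L) (a b c : L) : a * (b ⊔ c) = a * b ⊔ a * c := by
  rw [← sSup_pair, hL.1, iSup_pair]

theorem sup_mul (hL : IsCGMultLattice L) (a b c : L) : (a ⊔ b) * c = a * c ⊔ b * c := by
  simp only [mul_comm _ c, hL.mul_sup]

theorem mulLeftMono (hL : IsCGMultLattice L) : MulLeftMono L :=
  ⟨fun a b c hbc => by
    rw [← sup_eq_right.mpr hbc, hL.mul_sup]
    exact le_sup_left⟩

theorem mul_le_left (hL : IsCGMultLattice L) (a b : L) : a * b ≤ a :=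
  have := hL.mulLeftMono
  mul_le_of_le_one_right' (hL.2.1 ▸ le_top)

theorem mul_le_right (hL : IsCGMultLattice L) (a b : L) : a * b ≤ b :=
  mul_comm b a ▸ hL.mul_le_left b a

theorem mul_self_le_of_isPhiDeltaPrimary_of_not_isDeltaPrimary (hL : IsCGMultLattice L)
    {φ δ : L → L} {q : L}
    (hq : IsPhiDeltaPrimary φ δ q) (hnd : ¬ IsDeltaPrimary δ q) : q * q ≤ φ q := by
  have := hL.mulLeftMono
  obtain ⟨a, b, hab, ha, hb⟩ : ∃ a b : L, a * b ≤ q ∧ ¬ a ≤ q ∧ ¬ b ≤ δ q := by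
    by_contra! h
    exact hnd ⟨hq.1, fun a b hab => or_iff_not_imp_left.mpr (h a b hab)⟩
  have hsup : (a ⊔ q) * (b ⊔ q) ≤ q := by
    rw [hL.mul_sup, hL.sup_mul]
    exact sup_le (sup_le hab (hL.mul_le_left q b)) (hL.mul_le_right _ q)
  have hφ : (a ⊔ q) * (b ⊔ q) ≤ φ q := by
    by_contra hnφ
    rcases hq.2 _ _ hsup hnφ with h | h
    · exact ha (le_sup_left.trans h)
    · exact hb (le_sup_left.trans h)
  exact (mul_le_mul' le_sup_right le_sup_right).trans hφ

end IsCGMultLattice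

theorem lradical_mono {a b : L} (hab : a ≤ b) : lradical a ≤ lradical b :=
  sSup_le_sSup fun _ ⟨hx, n, hn, hxn⟩ => ⟨hx, n, hn, hxn.trans hab⟩

theorem lradical_le_lradical_of_mul_self_le [MulLeftMono L] {a b : L} (hab : a * a ≤ b) :
    lradical a ≤ lradical b := by
  refine sSup_le_sSup fun x ⟨hx, n, hn, hxn⟩ => ⟨hx, 2 * n, by omega, ?_⟩
  calc x ^ (2 * n) = x ^ n * x ^ n := by rw [two_mul, pow_add]
    _ ≤ a * a := mul_le_mul' hxn hxn
    _ ≤ b := hab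

theorem radical_eq_radical_phi_general (hL : IsCGMultLattice L)
    (δ φ : L → L) (hφ : ∀ a : L, φ a ≤ a)
    (q : L) (hq : IsPhiDeltaPrimary φ δ q) (hnd : ¬ IsDeltaPrimary δ q) :
    lradical q = lradical (φ q) := by
  have := hL.mulLeftMono
  exact le_antisymm
    (lradical_le_lradical_of_mul_self_le
      (hL.mul_self_le_of_isPhiDeltaPrimary_of_not_isDeltaPrimary hq hnd))
    (lradical_mono (hφ q))

theorem radical_eq_radical_phi (hL : IsCGMultLattice L)
    (δ φ : L → L) (hδ : IsExpansion δ) (hφ : ∀ a : L, φ a ≤ a)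
    (q : L) (hq : IsPhiDeltaPrimary φ δ q) (hnd : ¬ IsDeltaPrimary δ q) :
    lradical q = lradical (φ q) :=
  radical_eq_radical_phi_general hL δ φ hφ q hq hnd
end
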